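/- arXiv:0909.4638 — 3 statements merged into one kernel-verified Lean document; each statement's English description precedes it below -/
import Mathlib

section
/- Let V be a real vector space carrying a (1,1,1) almost contact structure (φ, ξ, η), let W be a linear subspace of V with V = W ⊕ ℝξ (internal direct sum), and let J : W → W and α : W → ℝ be the unique linear maps with φ(X) = J(X) + α(X)·ξ for all X ∈ W. Then J(J(X)) = X for every X ∈ W; that is, J is an almost product structure on W. -/
/-- Theorem 3.1 (pointwise): the induced tensor J on a noninvariant hyperplane W
with ξ nowhere tangent satisfies J² = id, i.e. J is an almost product structure. -/
theorem J_sq_eq_id {V : Type*} [AddCommGroup V] [Module ℝ V]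
    (φ : V →ₗ[ℝ] V) (ξ : V) (η : V →ₗ[ℝ] ℝ)
    (hξ : ξ ≠ 0)
    (hφξ : φ ξ = 0)
    (hφ2 : ∀ X : V, φ (φ X) = X + η X • ξ)
    (W : Submodule ℝ V)
    (hcompl : IsCompl W (Submodule.span ℝ {ξ}))
    (J : W →ₗ[ℝ] W) (α : W →ₗ[ℝ] ℝ)
    (hJα : ∀ X : W, φ (X : V) = (J X : V) + α X • ξ) :
    ∀ X : W, J (J X) = X := by
  intro X
  have h1 : φ (φ (X : V)) = (J (J X) : V) + α (J X) • ξ + α X • φ ξ := by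
    rw [hJα X, map_add, map_smul, hJα (J X)]
  rw [hφξ, smul_zero, add_zero, hφ2] at h1
  have hmem : ((J (J X) : V) - (X : V)) ∈ W ⊓ Submodule.span ℝ {ξ} := by
    constructor
    · exact sub_mem (J (J X)).2 X.2
    · have h2 : (J (J X) : V) - (X : V) = (η X - α (J X)) • ξ := by
        linear_combination (norm := module) -h1
      rw [h2]
      exact Submodule.smul_mem _ _ (Submodule.mem_span_singleton_self ξ)
  rw [hcompl.inf_eq_bot, Submodule.mem_bot, sub_eq_zero] at hmem
  exact Subtype.ext hmem
end

section
/- Let V be a real vector space carrying a Lorentzian almost paracontact structure (φ, ξ, η, g), let W be a linear subspace of V with V = W ⊕ ℝξ (internal direct sum), and let J : W → W and α : W → ℝ be the unique linear maps with φ(X) = J(X) + α(X)·ξ for all X ∈ W. Then g(J(X), Y) + α(X)·α(J(Y)) = g(X, J(Y)) + α(Y)·α(J(X)) for all X, Y ∈ W; equivalently, the bilinear form H(X, Y) := g(X, J(Y)) + α(J(X))·α(Y) on W is symmetric. -/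
/-- Relation (5.5): on a noninvariant hyperplane W of a Lorentzian almost
paracontact space, g(JX,Y) + α(X)α(JY) = g(X,JY) + α(Y)α(JX), i.e. the bilinear
form H(X,Y) = g(X,JY) + α(JX)α(Y) is symmetric. -/
theorem almost_product_metric_symm {V : Type*} [AddCommGroup V] [Module ℝ V]
    (φ : V →ₗ[ℝ] V) (ξ : V) (η : V →ₗ[ℝ] ℝ) (g : V →ₗ[ℝ] V →ₗ[ℝ] ℝ)
    (hξ : ξ ≠ 0)
    (hgsymm : ∀ X Y : V, g X Y = g Y X)
    (hφξ : φ ξ = 0)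
    (hφ2 : ∀ X : V, φ (φ X) = X + η X • ξ)
    (hgξ : ∀ X : V, g X ξ = η X)
    (hgφ : ∀ X Y : V, g (φ X) (φ Y) = g X Y + η X * η Y)
    (W : Submodule ℝ V)
    (hcompl : IsCompl W (Submodule.span ℝ {ξ}))
    (J : W →ₗ[ℝ] W) (α : W →ₗ[ℝ] ℝ)
    (hJα : ∀ X : W, φ (X : V) = (J X : V) + α X • ξ) :
    ∀ X Y : W,
      g (J X : V) (Y : V) + α X * α (J Y) = g (X : V) (J Y : V) + α Y * α (J X) := by
  -- η ξ = -1
  have hηξ : η ξ = -1 := by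
    have h := hφ2 ξ
    rw [hφξ, map_zero] at h
    have h2 : (1 + η ξ) • ξ = 0 := by
      rw [add_smul, one_smul, ← h]
    rcases smul_eq_zero.mp h2 with h3 | h3
    · linarith
    · exact absurd h3 hξ
  -- decomposition of φ² on W : J² = id, α∘J = η
  have hdec : ∀ X : W, α (J X) = η (X : V) ∧ J (J X) = X := by
    intro X
    have h := hφ2 (X : V)
    rw [hJα X, map_add, map_smul, hφξ, smul_zero, add_zero, hJα (J X)] at h
    -- h : (J (J X) : V) + α (J X) • ξ = X + η X • ξ
    have hmem : (α (J X) - η (X : V)) • ξ ∈ W ⊓ Submodule.span ℝ {ξ} := by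
      constructor
      · have he : (α (J X) - η (X : V)) • ξ = (X : V) - (J (J X) : V) := by
          rw [sub_smul]
          linear_combination (norm := module) h
        rw [he]
        exact sub_mem X.2 (J (J X)).2
      · exact Submodule.smul_mem _ _ (Submodule.mem_span_singleton_self ξ)
    rw [hcompl.inf_eq_bot, Submodule.mem_bot] at hmem
    have hα : α (J X) = η (X : V) := by
      rcases smul_eq_zero.mp hmem with h3 | h3
      · linarith
      · exact absurd h3 hξ
    refine ⟨hα, ?_⟩
    have : (J (J X) : V) = (X : V) := by
      rw [hα] at h
      linear_combination (norm := module) h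
    exact Subtype.ext this
  have hα : ∀ X : W, α (J X) = η (X : V) := fun X => (hdec X).1
  have hJ2 : ∀ X : W, J (J X) = X := fun X => (hdec X).2
  have hηJ : ∀ X : W, η (J X : V) = α X := by
    intro X
    rw [← hα (J X), hJ2]
  intro X Y
  have key := hgφ (X : V) (φ (Y : V))
  rw [hφ2 (Y : V), hJα X, hJα Y] at key
  simp only [map_add, map_smul, LinearMap.add_apply, LinearMap.smul_apply,
    smul_eq_mul] at key
  rw [hgsymm ξ (Y : V)] at key
  simp only [hgξ, hηξ, hηJ, hJ2, ← hα] at key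
  linear_combination key
end

section
/- Let V be a real vector space carrying a Lorentzian almost paracontact structure (φ, ξ, η, g), let W be a linear subspace of V with V = W ⊕ ℝξ (internal direct sum), and let J : W → W and α : W → ℝ be the unique linear maps with φ(X) = J(X) + α(X)·ξ for all X ∈ W. Set G(X, Y) := g(X, Y) + α(X)·α(Y) and Cα := α ∘ J on W. Then for all X, Y ∈ W: g(φX, Y) = G(J(X), Y) - (Cα(X)·α(Y) - α(X)·Cα(Y)); that is, the restriction to W of the fundamental form Φ(X, Y) = g(φX, Y) equals Ω - Cα ∧ α, where Ω(X, Y) = G(J(X), Y). -/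
/-- Lemma 5.3 (pointwise): i*Φ = Ω - Cα ∧ α, i.e. for X, Y in the hyperplane W,
g(φX, Y) = G(JX, Y) - (Cα(X)α(Y) - α(X)Cα(Y)), where G = g + α ⊗ α and Cα = α ∘ J. -/
theorem fundamental_form_restriction {V : Type*} [AddCommGroup V] [Module ℝ V]
    (φ : V →ₗ[ℝ] V) (ξ : V) (η : V →ₗ[ℝ] ℝ) (g : V →ₗ[ℝ] V →ₗ[ℝ] ℝ)
    (hξ : ξ ≠ 0)
    (hgsymm : ∀ X Y : V, g X Y = g Y X)
    (hφξ : φ ξ = 0)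
    (hφ2 : ∀ X : V, φ (φ X) = X + η X • ξ)
    (hgξ : ∀ X : V, g X ξ = η X)
    (hgφ : ∀ X Y : V, g (φ X) (φ Y) = g X Y + η X * η Y)
    (W : Submodule ℝ V)
    (hcompl : IsCompl W (Submodule.span ℝ {ξ}))
    (J : W →ₗ[ℝ] W) (α : W →ₗ[ℝ] ℝ)
    (hJα : ∀ X : W, φ (X : V) = (J X : V) + α X • ξ) :
    ∀ X Y : W,
      g (φ (X : V)) (Y : V) =
        (g (J X : V) (Y : V) + α (J X) * α Y) - (α (J X) * α Y - α X * α (J Y)) := by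
  have key : ∀ Y : W, α (J Y) = η (Y : V) := by
    intro Y
    have h1 : φ (φ (Y : V)) = (J (J Y) : V) + α (J Y) • ξ := by
      rw [hJα Y, map_add, map_smul, hφξ, smul_zero, add_zero, hJα (J Y)]
    have h2 := hφ2 (Y : V)
    have h3 : ((J (J Y) : V) - (Y : V)) = (η (Y : V) - α (J Y)) • ξ := by
      rw [h1] at h2
      linear_combination (norm := module) h2
    have hW : ((J (J Y) : V) - (Y : V)) ∈ W := sub_mem (J (J Y)).2 Y.2
    have hS : ((J (J Y) : V) - (Y : V)) ∈ Submodule.span ℝ {ξ} := by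
      rw [h3]; exact Submodule.smul_mem _ _ (Submodule.mem_span_singleton_self ξ)
    have h0 : ((J (J Y) : V) - (Y : V)) = 0 := by
      have := hcompl.inf_eq_bot
      have : ((J (J Y) : V) - (Y : V)) ∈ (⊥ : Submodule ℝ V) := by
        rw [← this]; exact ⟨hW, hS⟩
      simpa using this
    rw [h0] at h3
    rcases smul_eq_zero.mp h3.symm with h | h
    · linarith [sub_eq_zero.mp (by linarith [h] : η (Y : V) - α (J Y) = 0)]
    · exact absurd h hξ
  intro X Y
  rw [hJα X, map_add, map_smul]
  simp only [LinearMap.add_apply, LinearMap.smul_apply, smul_eq_mul]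
  rw [hgsymm ξ (Y : V), hgξ, ← key Y]
  ring
end
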